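/- Let N ≥ 2, β ∈ (0,1) and ϱ > −N. Then there exists a constant c > 1, depending only on ϱ, β and N, such that for every ε ≥ 0, every u : ℝ^{N-1} → ℝ of class C^{1,β}, and all s, t ∈ ℝ^{N-1} with t ≠ 0: |𝒦_{ϱ,ε}(u,s,t) − 𝒦_{ϱ,ε}(u,s,−t)| ≤ c (1 + ‖u‖_{C^{1,β}})^c · min(|t|^β, 1), where 𝒦_{ϱ,ε}(u,s,t) := ( 1 + ((u(s) − u(s−t))/|t|)² + |t|^{−2}ε² )^{−(N+ϱ)/2}. -/

import Mathlib

open MeasureTheory Real Filter Topology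
open scoped Classical

noncomputable section

abbrev ES (m : ℕ) : Type := EuclideanSpace ℝ (Fin (m + 1))

/-- `u` is of class `C^{1,β}`. -/
def IsC1Beta {n : ℕ} (β : ℝ) (u : EuclideanSpace ℝ (Fin n) → ℝ) : Prop :=
  ContDiff ℝ 1 u ∧ (∃ C, ∀ x, |u x| ≤ C) ∧ (∃ C, ∀ x, ‖fderiv ℝ u x‖ ≤ C) ∧
    (∃ C, ∀ x y, ‖fderiv ℝ u x - fderiv ℝ u y‖ ≤ C * ‖x - y‖ ^ β)

/-- The `β`-Hölder seminorm of the gradient of `u`. -/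
def holderSemi {n : ℕ} (β : ℝ) (u : EuclideanSpace ℝ (Fin n) → ℝ) : ℝ :=
  ⨆ p : EuclideanSpace ℝ (Fin n) × EuclideanSpace ℝ (Fin n),
    if p.1 = p.2 then 0 else ‖fderiv ℝ u p.1 - fderiv ℝ u p.2‖ / ‖p.1 - p.2‖ ^ β

/-- The `C^{1,β}` norm: `sup |u| + sup |∇u| + [∇u]_β`. -/
def c1betaNorm {n : ℕ} (β : ℝ) (u : EuclideanSpace ℝ (Fin n) → ℝ) : ℝ :=
  (⨆ x, |u x|) + (⨆ x, ‖fderiv ℝ u x‖) + holderSemi β u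

/-- The kernel `𝒦_{ϱ,ε}(u,s,t) = (1 + ((u(s)-u(s-t))/|t|)² + ε²/|t|²)^{-(N+ϱ)/2}`,
with `N = m + 2`. -/
def Kker (m : ℕ) (ϱ ε : ℝ) (u : ES m → ℝ) (s t : ES m) : ℝ :=
  (1 + ((u s - u (s - t)) / ‖t‖) ^ 2 + ε ^ 2 / ‖t‖ ^ 2) ^ (-(((m : ℝ) + 2 + ϱ) / 2))

/-!
Write `a = (u(s) - u(s-t))/|t|` and `b = (u(s) - u(s+t))/|t|`, so that the two kernels are
`(1 + a² + ε²/|t|²)^(-p)` and `(1 + b² + ε²/|t|²)^(-p)` with `p = (N + ϱ)/2 ≥ 0`. On `[1, ∞)` the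
map `x ↦ x^(-p)` takes values in `[0, 1]` and is `p`-Lipschitz, so the difference is at most `1` and
at most `p |a + b| |a - b|`. Here `|a - b| ≤ 2 sup|∇u|` by the mean value theorem, while
`a + b = (2u(s) - u(s+t) - u(s-t))/|t|` is a symmetric second difference quotient, which the
Hölder continuity of `∇u` bounds by `2 [∇u]_β |t|^β`. Both seminorms are at most `‖u‖_{C^{1,β}}`,
so `c = max (4p) 2` works.
-/

lemma abs_rpow_neg_sub_rpow_neg_le {p x y : ℝ} (hp : 0 ≤ p) (hx : 1 ≤ x) (hy : 1 ≤ y) :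
    |x ^ (-p) - y ^ (-p)| ≤ p * |x - y| := by
  have hderiv : ∀ z ∈ Set.Ici (1 : ℝ), HasDerivWithinAt (fun z : ℝ => z ^ (-p))
      (-p * z ^ (-p - 1)) (Set.Ici 1) z := fun z hz =>
    (hasDerivAt_rpow_const (Or.inl (by linarith [Set.mem_Ici.mp hz]))).hasDerivWithinAt
  have hderiv_le : ∀ z ∈ Set.Ici (1 : ℝ), ‖-p * z ^ (-p - 1)‖ ≤ p := fun z hz => by
    have hz : 1 ≤ z := hz
    rw [norm_mul, norm_neg, norm_of_nonneg hp, norm_of_nonneg (rpow_nonneg (by linarith) _)]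
    exact mul_le_of_le_one_right hp (rpow_le_one_of_one_le_of_nonpos hz (by linarith))
  simpa only [norm_eq_abs] using
    (convex_Ici 1).norm_image_sub_le_of_norm_hasDerivWithin_le hderiv hderiv_le hy hx

lemma rpow_neg_mem_Icc {p x : ℝ} (hp : 0 ≤ p) (hx : 1 ≤ x) : x ^ (-p) ∈ Set.Icc 0 1 :=
  ⟨rpow_nonneg (by linarith) _, rpow_le_one_of_one_le_of_nonpos hx (by linarith)⟩

lemma abs_rpow_neg_one_add_sq_sub_rpow_neg_le {p e : ℝ} (hp : 0 ≤ p) (he : 0 ≤ e) (a b : ℝ) :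
    |(1 + a ^ 2 + e) ^ (-p) - (1 + b ^ 2 + e) ^ (-p)| ≤ p * (|a + b| * |a - b|) := by
  have key := abs_rpow_neg_sub_rpow_neg_le hp (x := 1 + a ^ 2 + e) (y := 1 + b ^ 2 + e)
    (by nlinarith [sq_nonneg a]) (by nlinarith [sq_nonneg b])
  rwa [show 1 + a ^ 2 + e - (1 + b ^ 2 + e) = (a + b) * (a - b) by ring, abs_mul] at key

section Holder

variable {E : Type*} [NormedAddCommGroup E] [NormedSpace ℝ E] {u : E → ℝ} {β H : ℝ}

lemma abs_sub_sub_fderiv_le_of_holder (hu : Differentiable ℝ u) (hβ : 0 ≤ β) (hH : 0 ≤ H)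
    (hHolder : ∀ x y, ‖fderiv ℝ u x - fderiv ℝ u y‖ ≤ H * ‖x - y‖ ^ β) (s h : E) :
    |u (s + h) - u s - fderiv ℝ u s h| ≤ H * ‖h‖ ^ β * ‖h‖ := by
  have hderiv_near : ∀ z ∈ Metric.closedBall s ‖h‖,
      ‖fderiv ℝ u z - fderiv ℝ u s‖ ≤ H * ‖h‖ ^ β := fun z hz =>
    (hHolder z s).trans <| mul_le_mul_of_nonneg_left
      (rpow_le_rpow (norm_nonneg _) (mem_closedBall_iff_norm.mp hz) hβ) hH
  simpa [norm_eq_abs] using (convex_closedBall s ‖h‖).norm_image_sub_le_of_norm_fderiv_le'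
    (y := s + h) (fun z _ => hu z) hderiv_near (Metric.mem_closedBall_self (norm_nonneg h))
    (by simp [dist_eq_norm])

lemma abs_add_sub_two_mul_le_of_holder (hu : Differentiable ℝ u) (hβ : 0 ≤ β) (hH : 0 ≤ H)
    (hHolder : ∀ x y, ‖fderiv ℝ u x - fderiv ℝ u y‖ ≤ H * ‖x - y‖ ^ β) (s h : E) :
    |u (s + h) + u (s - h) - 2 * u s| ≤ 2 * H * ‖h‖ ^ β * ‖h‖ := by
  have hplus := abs_sub_sub_fderiv_le_of_holder hu hβ hH hHolder s h
  have hminus := abs_sub_sub_fderiv_le_of_holder hu hβ hH hHolder s (-h)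
  rw [norm_neg, map_neg, ← sub_eq_add_neg] at hminus
  calc |u (s + h) + u (s - h) - 2 * u s|
      = |(u (s + h) - u s - fderiv ℝ u s h) + (u (s - h) - u s - -fderiv ℝ u s h)| := by
        ring_nf
    _ ≤ H * ‖h‖ ^ β * ‖h‖ + H * ‖h‖ ^ β * ‖h‖ := (abs_add_le _ _).trans (add_le_add hplus hminus)
    _ = 2 * H * ‖h‖ ^ β * ‖h‖ := by ring

end Holder

section C1Beta

variable {n : ℕ} {β : ℝ} {u : EuclideanSpace ℝ (Fin n) → ℝ}

lemma holderSemi_nonneg : 0 ≤ holderSemi β u :=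
  Real.iSup_nonneg fun p => by
    split_ifs
    · exact le_rfl
    · positivity

lemma iSup_norm_fderiv_le_c1betaNorm : ⨆ x, ‖fderiv ℝ u x‖ ≤ c1betaNorm β u := by
  have : 0 ≤ ⨆ x, |u x| := Real.iSup_nonneg fun x => abs_nonneg (u x)
  have := holderSemi_nonneg (β := β) (u := u)
  unfold c1betaNorm
  linarith

lemma holderSemi_le_c1betaNorm : holderSemi β u ≤ c1betaNorm β u := by
  have : 0 ≤ ⨆ x, |u x| := Real.iSup_nonneg fun x => abs_nonneg (u x)
  have : 0 ≤ ⨆ x, ‖fderiv ℝ u x‖ := Real.iSup_nonneg fun x => norm_nonneg _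
  unfold c1betaNorm
  linarith

lemma one_le_one_add_c1betaNorm : 1 ≤ 1 + c1betaNorm β u := by
  linarith [iSup_norm_fderiv_le_c1betaNorm (β := β) (u := u),
    Real.iSup_nonneg fun x => norm_nonneg (fderiv ℝ u x)]

lemma iSup_norm_fderiv_mul_holderSemi_le {c : ℝ} (hc : 2 ≤ c) :
    (⨆ x, ‖fderiv ℝ u x‖) * holderSemi β u ≤ (1 + c1betaNorm β u) ^ c :=
  calc (⨆ x, ‖fderiv ℝ u x‖) * holderSemi β u ≤ (1 + c1betaNorm β u) ^ (2 : ℝ) := by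
        rw [rpow_two, sq]
        exact mul_le_mul (by linarith [iSup_norm_fderiv_le_c1betaNorm (β := β) (u := u)])
          (by linarith [holderSemi_le_c1betaNorm (β := β) (u := u)]) holderSemi_nonneg
          (by linarith [one_le_one_add_c1betaNorm (β := β) (u := u)])
    _ ≤ (1 + c1betaNorm β u) ^ c := rpow_le_rpow_of_exponent_le one_le_one_add_c1betaNorm hc

lemma IsC1Beta.differentiable (hu : IsC1Beta β u) : Differentiable ℝ u :=
  hu.1.differentiable one_ne_zero

lemma IsC1Beta.norm_fderiv_le_iSup (hu : IsC1Beta β u) (x : EuclideanSpace ℝ (Fin n)) :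
    ‖fderiv ℝ u x‖ ≤ ⨆ y, ‖fderiv ℝ u y‖ := by
  obtain ⟨-, -, ⟨C, hC⟩, -⟩ := hu
  exact le_ciSup ⟨C, Set.forall_mem_range.mpr hC⟩ x

lemma IsC1Beta.norm_fderiv_sub_le_holderSemi (hu : IsC1Beta β u)
    (x y : EuclideanSpace ℝ (Fin n)) :
    ‖fderiv ℝ u x - fderiv ℝ u y‖ ≤ holderSemi β u * ‖x - y‖ ^ β := by
  obtain ⟨-, -, -, ⟨C, hC⟩⟩ := hu
  rcases eq_or_ne x y with rfl | hxy
  · simpa using mul_nonneg holderSemi_nonneg (rpow_nonneg (norm_nonneg (x - x)) β)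
  have hpos : 0 < ‖x - y‖ ^ β := rpow_pos_of_pos (norm_pos_iff.mpr (sub_ne_zero.mpr hxy)) β
  have hbdd : BddAbove (Set.range fun q : EuclideanSpace ℝ (Fin n) × EuclideanSpace ℝ (Fin n) =>
      if q.1 = q.2 then 0 else ‖fderiv ℝ u q.1 - fderiv ℝ u q.2‖ / ‖q.1 - q.2‖ ^ β) := by
    refine ⟨max C 0, Set.forall_mem_range.mpr fun q => ?_⟩
    split_ifs with hq
    · exact le_max_right _ _
    · have hqpos : 0 < ‖q.1 - q.2‖ ^ β :=
        rpow_pos_of_pos (norm_pos_iff.mpr (sub_ne_zero.mpr hq)) β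
      exact ((div_le_iff₀ hqpos).mpr (hC q.1 q.2)).trans (le_max_left _ _)
  have := le_ciSup hbdd (x, y)
  simp only [hxy, if_false] at this
  exact (div_le_iff₀ hpos).mp this

lemma IsC1Beta.abs_sub_le (hu : IsC1Beta β u) (x y : EuclideanSpace ℝ (Fin n)) :
    |u x - u y| ≤ (⨆ z, ‖fderiv ℝ u z‖) * ‖x - y‖ := by
  simpa only [norm_eq_abs] using convex_univ.norm_image_sub_le_of_norm_fderiv_le
    (fun z _ => hu.differentiable z) (fun z _ => hu.norm_fderiv_le_iSup z)
    (Set.mem_univ y) (Set.mem_univ x)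

end C1Beta

lemma abs_Kker_sub_Kker_neg_le {m : ℕ} {ϱ : ℝ} (hϱ : -((m : ℝ) + 2) ≤ ϱ) (ε : ℝ)
    {u : ES m → ℝ} {s t : ES m} (ht : t ≠ 0) {L D : ℝ}
    (hLip : ∀ x y, |u x - u y| ≤ L * ‖x - y‖)
    (hsecond : |u (s + t) + u (s - t) - 2 * u s| ≤ D * ‖t‖) :
    |Kker m ϱ ε u s t - Kker m ϱ ε u s (-t)| ≤ ((m + 2 + ϱ) / 2) * (D * (2 * L)) := by
  have hT : 0 < ‖t‖ := norm_pos_iff.mpr ht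
  have hspread : |u (s + t) - u (s - t)| ≤ 2 * L * ‖t‖ := by
    have h2t : (s + t) - (s - t) = (2 : ℝ) • t := by rw [two_smul]; abel
    rw [mul_comm 2 L, mul_assoc, ← Real.norm_two, ← norm_smul, ← h2t]
    exact hLip _ _
  set a := (u s - u (s - t)) / ‖t‖
  set b := (u s - u (s + t)) / ‖t‖
  have hab_sum : |a + b| ≤ D := by
    rw [show a + b = -(u (s + t) + u (s - t) - 2 * u s) / ‖t‖ by ring, abs_div, abs_neg,
      abs_of_pos hT, div_le_iff₀ hT]
    exact hsecond
  have hab_diff : |a - b| ≤ 2 * L := by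
    rw [show a - b = (u (s + t) - u (s - t)) / ‖t‖ by ring, abs_div, abs_of_pos hT,
      div_le_iff₀ hT]
    exact hspread
  have key := abs_rpow_neg_one_add_sq_sub_rpow_neg_le (p := ((m : ℝ) + 2 + ϱ) / 2) (by linarith)
    (div_nonneg (sq_nonneg ε) (sq_nonneg ‖t‖)) a b
  rw [Kker, Kker, norm_neg, sub_neg_eq_add]
  refine key.trans (mul_le_mul_of_nonneg_left ?_ (by linarith))
  exact mul_le_mul hab_sum hab_diff (abs_nonneg _) ((abs_nonneg _).trans hab_sum)

lemma abs_Kker_sub_Kker_le_one {m : ℕ} {ϱ : ℝ} (hϱ : -((m : ℝ) + 2) ≤ ϱ) (ε : ℝ)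
    (u : ES m → ℝ) (s t t' : ES m) : |Kker m ϱ ε u s t - Kker m ϱ ε u s t'| ≤ 1 := by
  have hp : 0 ≤ ((m : ℝ) + 2 + ϱ) / 2 := by linarith
  have hK : ∀ t, Kker m ϱ ε u s t ∈ Set.Icc 0 1 := fun t => by
    have he : 0 ≤ ε ^ 2 / ‖t‖ ^ 2 := by positivity
    exact rpow_neg_mem_Icc hp (by nlinarith [sq_nonneg ((u s - u (s - t)) / ‖t‖)])
  obtain ⟨ht₀, ht₁⟩ := hK t
  obtain ⟨ht'₀, ht'₁⟩ := hK t'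
  rw [abs_sub_le_iff]
  constructor <;> linarith

/-- the odd-part estimate
`|𝒦_{ϱ,ε}(u,s,t) - 𝒦_{ϱ,ε}(u,s,-t)| ≤ c (1 + ‖u‖_{C^{1,β}})^c min(|t|^β, 1)`, with a constant
`c > 1` depending only on `ϱ, β, N`.  Here `N = m + 2 ≥ 2` and `ϱ > -N`. -/
theorem statement_18 (m : ℕ) (β ϱ : ℝ) (hβ : β ∈ Set.Ioo (0 : ℝ) 1)
    (hϱ : -((m : ℝ) + 2) < ϱ) :
    ∃ c > 1, ∀ ε : ℝ, 0 ≤ ε → ∀ u : ES m → ℝ, IsC1Beta β u →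
      ∀ s t : ES m, t ≠ 0 →
        |Kker m ϱ ε u s t - Kker m ϱ ε u s (-t)|
          ≤ c * (1 + c1betaNorm β u) ^ c * min (‖t‖ ^ β) 1 := by
  set p : ℝ := ((m : ℝ) + 2 + ϱ) / 2
  have hp : 0 ≤ p := by simp only [p]; linarith
  set c := max (4 * p) 2
  have hc : 2 ≤ c := le_max_right _ _
  refine ⟨c, by linarith, fun ε _ u hu s t ht => ?_⟩
  set M := ⨆ x, ‖fderiv ℝ u x‖
  set H := holderSemi β u
  have hsecond := abs_add_sub_two_mul_le_of_holder hu.differentiable hβ.1.le holderSemi_nonneg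
    hu.norm_fderiv_sub_le_holderSemi s t
  have hodd := abs_Kker_sub_Kker_neg_le hϱ.le ε ht hu.abs_sub_le hsecond
  have hconst : 4 * p * (M * H) ≤ c * (1 + c1betaNorm β u) ^ c :=
    mul_le_mul (le_max_left _ _) (iSup_norm_fderiv_mul_holderSemi_le hc)
      (mul_nonneg (Real.iSup_nonneg fun x => norm_nonneg _) holderSemi_nonneg) (by linarith)
  have hone : 1 ≤ c * (1 + c1betaNorm β u) ^ c :=
    one_le_mul_of_one_le_of_one_le (by linarith) (one_le_rpow one_le_one_add_c1betaNorm (by linarith))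
  rcases min_cases (‖t‖ ^ β) 1 with ⟨hmin, -⟩ | ⟨hmin, -⟩ <;> rw [hmin]
  · calc _ ≤ p * (2 * H * ‖t‖ ^ β * (2 * M)) := hodd
      _ = 4 * p * (M * H) * ‖t‖ ^ β := by ring
      _ ≤ c * (1 + c1betaNorm β u) ^ c * ‖t‖ ^ β := by gcongr
  · simpa using (abs_Kker_sub_Kker_le_one hϱ.le ε u s t (-t)).trans hone
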